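/- arXiv:1405.5900 — 2 statements merged into one kernel-verified Lean document; each statement's English description precedes it below -/
import Mathlib

section
/- For every 1 ≤ k < n and every 1 ≤ i ≤ n, the noisy and noise-free minimizing residual polynomials satisfy |Q̂_k(λ_i) − Q*_k(λ_i)| ≤ 2 · ( max_{(j_1,…,j_k)∈I_k^+} | 1 − (p̂_{j_1}²⋯p̂_{j_k}²)/(p_{j_1}²⋯p_{j_k}²) | ) · ( max_{(j_1,…,j_k)∈I_k^+} ∏_{l=1}^k |λ_i/λ_{j_l} − 1| ). -/
/-!
By the spectral decomposition, `‖Q(XXᵀ)v‖² = ∑ⱼ (uⱼ ⬝ v)² Q(λⱼ)²`, so `Q̂_k` and `Q*_k` minimise the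
same discrete weighted least-squares problem on the nodes `λⱼ`, with weights `p̂ⱼ²` and `pⱼ²`.
Varying a minimiser `Q` along `Xᵐ` (`1 ≤ m ≤ k`) gives `∑ⱼ wⱼ λⱼᵐ Q(λⱼ) = 0`, and these relations
determine `Q` because there are more than `k` nodes. Heine's formula solves them: `Q` is the average
of `∏_{j∈S} (1 - x/λⱼ)` over the `k`-subsets `S` of nodes, weighted by `∏_{j∈S} wⱼ λⱼ²` times the
squared Vandermonde determinant of `S`; the relations reduce to `∑_{j∈S} λⱼᵐ ℓⱼ(0) = 0` for the
Lagrange basis `ℓⱼ` of a `(k+1)`-set `S`.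
Passing from `pⱼ²` to `p̂ⱼ²` multiplies the weight of `S` by `∏ p̂ⱼ² / ∏ pⱼ²`, which moves the
normalised weights by at most `2 max_S |1 - ∏ p̂ⱼ² / ∏ pⱼ²|` in `ℓ¹`, and every
`|∏_{j∈S} (1 - λᵢ/λⱼ)|` is at most the second maximum.
-/

open Matrix Polynomial Finset

lemma sum_abs_div_sum_sub_div_sum_le {α : Type*} {T : Finset α} (hT : T.Nonempty) {a b : α → ℝ}
    (ha : ∀ s ∈ T, 0 < a s) (hb : ∀ s ∈ T, 0 < b s) {δ : ℝ}
    (hδ : ∀ s ∈ T, |1 - a s / b s| ≤ δ) :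
    ∑ s ∈ T, |a s / ∑ t ∈ T, a t - b s / ∑ t ∈ T, b t| ≤ 2 * δ := by
  set A := ∑ t ∈ T, a t
  set B := ∑ t ∈ T, b t
  have hA : 0 < A := sum_pos ha hT
  have hB : 0 < B := sum_pos hb hT
  have hab : ∑ s ∈ T, |a s - b s| ≤ δ * B := by
    rw [mul_sum]
    refine sum_le_sum fun s hs => ?_
    have hbs := hb s hs
    calc |a s - b s| = |1 - a s / b s| * b s := by
          rw [← abs_of_pos hbs, ← abs_mul, abs_of_pos hbs, sub_mul, div_mul_cancel₀ _ hbs.ne',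
            abs_sub_comm, one_mul]
      _ ≤ δ * b s := by gcongr; exact hδ s hs
  have hAB : |A - B| ≤ δ * B := by
    rw [← sum_sub_distrib]
    exact (abs_sum_le_sum_abs _ _).trans hab
  calc ∑ s ∈ T, |a s / A - b s / B|
      ≤ ∑ s ∈ T, (a s / A * (|A - B| / B) + |a s - b s| / B) := by
        refine sum_le_sum fun s hs => ?_
        have hsplit : a s / A - b s / B = a s / A * ((B - A) / B) + (a s - b s) / B := by
          field_simp; ring
        rw [hsplit]
        refine (abs_add_le _ _).trans_eq ?_
        rw [abs_mul, abs_div, abs_div, abs_div, abs_of_pos (ha s hs), abs_of_pos hA, abs_of_pos hB,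
          abs_sub_comm B]
    _ = |A - B| / B + (∑ s ∈ T, |a s - b s|) / B := by
        rw [sum_add_distrib, ← sum_mul, ← sum_div, ← sum_div, div_self hA.ne', one_mul]
    _ ≤ δ + δ := by
        gcongr
        · rwa [div_le_iff₀ hB]
        · rwa [div_le_iff₀ hB]
    _ = 2 * δ := by ring

namespace ResidualPolynomial

section Heine

variable {ι : Type*} (lam : ι → ℝ)

noncomputable def nodePoly (s : Finset ι) : ℝ[X] :=
  ∏ j ∈ s, (1 - C (lam j)⁻¹ * X)

lemma natDegree_nodePoly_le (s : Finset ι) : (nodePoly lam s).natDegree ≤ #s := by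
  refine (natDegree_prod_le _ _).trans ((sum_le_card_nsmul _ _ 1 fun j _ => ?_).trans_eq (by simp))
  exact (natDegree_sub_le _ _).trans
    (max_le (by simp) ((natDegree_C_mul_le _ _).trans natDegree_X_le))

lemma eval_nodePoly (s : Finset ι) (x : ℝ) :
    (nodePoly lam s).eval x = ∏ j ∈ s, (1 - (lam j)⁻¹ * x) := by
  simp [nodePoly, eval_prod]

lemma eval_nodePoly_zero (s : Finset ι) : (nodePoly lam s).eval 0 = 1 := by
  simp [eval_nodePoly]

lemma eval_nodePoly_of_mem {s : Finset ι} {t : ι} (ht : t ∈ s) (hlam : lam t ≠ 0) :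
    (nodePoly lam s).eval (lam t) = 0 := by
  rw [eval_nodePoly]
  exact prod_eq_zero ht (by rw [inv_mul_cancel₀ hlam, sub_self])

noncomputable def sqVandermonde (s : Finset ι) : ℝ :=
  ∏ p ∈ s.offDiag, |lam p.1 - lam p.2|

lemma sqVandermonde_pos (hinj : Function.Injective lam) (s : Finset ι) : 0 < sqVandermonde lam s :=
  prod_pos fun _ hp => abs_pos.2 (sub_ne_zero.2 fun h => (mem_offDiag.1 hp).2.2 (hinj h))

lemma abs_eval_nodePoly (s : Finset ι) (x : ℝ) :
    |(nodePoly lam s).eval x| = ∏ j ∈ s, |x / lam j - 1| := by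
  rw [eval_nodePoly, abs_prod]
  exact prod_congr rfl fun j _ => by rw [abs_sub_comm, inv_mul_eq_div]

variable (w : ι → ℝ)

noncomputable def heineWeight (s : Finset ι) : ℝ :=
  (∏ x ∈ s, w x * lam x ^ 2) * sqVandermonde lam s

lemma heineWeight_pos (hinj : Function.Injective lam) (hlam : ∀ j, lam j ≠ 0)
    (hw : ∀ j, 0 < w j) (s : Finset ι) : 0 < heineWeight lam w s := by
  refine mul_pos (prod_pos fun x _ => mul_pos (hw x) ?_) (sqVandermonde_pos lam hinj s)
  have := hlam x
  positivity

lemma heineWeight_div_heineWeight (hinj : Function.Injective lam) (hlam : ∀ j, lam j ≠ 0)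
    (v : ι → ℝ) (s : Finset ι) :
    heineWeight lam v s / heineWeight lam w s = (∏ x ∈ s, v x) / ∏ x ∈ s, w x := by
  have hpos : 0 < (∏ x ∈ s, lam x ^ 2) * sqVandermonde lam s :=
    mul_pos (prod_pos fun x _ => by have := hlam x; positivity) (sqVandermonde_pos lam hinj s)
  simp only [heineWeight, prod_mul_distrib, mul_assoc]
  exact mul_div_mul_right _ _ hpos.ne'

variable [Fintype ι]

/- Heine's formula for the orthogonal polynomial of degree `k` of the discrete measure
`∑ⱼ wⱼ λⱼ δ_{λⱼ}`, normalised by `Q(0) = 1`. -/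
noncomputable def heinePoly (k : ℕ) : ℝ[X] :=
  ∑ s ∈ powersetCard k univ,
    C (heineWeight lam w s / ∑ t ∈ powersetCard k univ, heineWeight lam w t) * nodePoly lam s

lemma eval_heinePoly (k : ℕ) (x : ℝ) :
    (heinePoly lam w k).eval x = ∑ s ∈ powersetCard k univ,
      heineWeight lam w s / (∑ t ∈ powersetCard k univ, heineWeight lam w t) *
        (nodePoly lam s).eval x := by
  simp [heinePoly, eval_finsetSum]

lemma natDegree_heinePoly_le (k : ℕ) : (heinePoly lam w k).natDegree ≤ k := by
  refine natDegree_sum_le_of_forall_le _ _ fun s hs => (natDegree_C_mul_le _ _).trans ?_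
  exact (natDegree_nodePoly_le lam s).trans (mem_powersetCard.1 hs).2.le

lemma eval_heinePoly_zero (hinj : Function.Injective lam) (hlam : ∀ j, lam j ≠ 0)
    (hw : ∀ j, 0 < w j) {k : ℕ} (hk : k ≤ Fintype.card ι) : (heinePoly lam w k).eval 0 = 1 := by
  have hpos : 0 < ∑ t ∈ powersetCard k univ, heineWeight lam w t :=
    sum_pos (fun s _ => heineWeight_pos lam w hinj hlam hw s)
      (powersetCard_nonempty.2 (by simpa using hk))
  simp only [eval_heinePoly, eval_nodePoly_zero, mul_one, ← sum_div, div_self hpos.ne']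

lemma abs_eval_heinePoly_sub_le (hinj : Function.Injective lam) (hlam : ∀ j, lam j ≠ 0)
    {v : ι → ℝ} (hv : ∀ j, 0 < v j) (hw : ∀ j, 0 < w j) {k : ℕ} (hk : k ≤ Fintype.card ι)
    (x : ℝ) {δ M : ℝ}
    (hδ : ∀ s ∈ powersetCard k univ, |1 - (∏ j ∈ s, v j) / ∏ j ∈ s, w j| ≤ δ)
    (hM : ∀ s ∈ powersetCard k univ, |(nodePoly lam s).eval x| ≤ M) :
    |(heinePoly lam v k).eval x - (heinePoly lam w k).eval x| ≤ 2 * δ * M := by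
  have hne : (powersetCard k (univ : Finset ι)).Nonempty :=
    powersetCard_nonempty.2 (by simpa using hk)
  have hM0 : 0 ≤ M := (abs_nonneg _).trans (hM _ hne.choose_spec)
  have hcoeff := sum_abs_div_sum_sub_div_sum_le hne
    (fun s _ => heineWeight_pos lam v hinj hlam hv s)
    (fun s _ => heineWeight_pos lam w hinj hlam hw s)
    (fun s hs => (heineWeight_div_heineWeight lam w hinj hlam v s).symm ▸ hδ s hs)
  rw [eval_heinePoly, eval_heinePoly, ← sum_sub_distrib]
  calc _ ≤ ∑ s ∈ powersetCard k univ,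
        |heineWeight lam v s / (∑ t ∈ powersetCard k univ, heineWeight lam v t) -
          heineWeight lam w s / ∑ t ∈ powersetCard k univ, heineWeight lam w t| * M := by
        refine (abs_sum_le_sum_abs _ _).trans (sum_le_sum fun s hs => ?_)
        rw [← sub_mul, abs_mul]
        exact mul_le_mul_of_nonneg_left (hM s hs) (abs_nonneg _)
    _ ≤ 2 * δ * M := by rw [← sum_mul]; exact mul_le_mul_of_nonneg_right hcoeff hM0

def IsMinResidual (k : ℕ) (Q : ℝ[X]) : Prop :=
  Q.natDegree ≤ k ∧ Q.eval 0 = 1 ∧ ∀ P : ℝ[X], P.natDegree ≤ k → P.eval 0 = 1 →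
    ∑ t, w t * Q.eval (lam t) ^ 2 ≤ ∑ t, w t * P.eval (lam t) ^ 2

lemma IsMinResidual.sum_mul_pow_mul_eval {lam w : ι → ℝ} {k : ℕ} {Q : ℝ[X]}
    (hQ : IsMinResidual lam w k Q) {m : ℕ} (hm1 : 1 ≤ m) (hmk : m ≤ k) :
    ∑ t, w t * lam t ^ m * Q.eval (lam t) = 0 := by
  obtain ⟨hdeg, h0, hmin⟩ := hQ
  -- `Q + c Xᵐ` is admissible, so its excess over the minimum is a nonnegative quadratic in `c`.
  have hquad : ∀ c : ℝ, 0 ≤ (∑ t, w t * (lam t ^ m) ^ 2) * (c * c) +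
      2 * (∑ t, w t * lam t ^ m * Q.eval (lam t)) * c + 0 := by
    intro c
    have hdeg' : (Q + C c * X ^ m).natDegree ≤ k :=
      (natDegree_add_le _ _).trans (max_le hdeg ((natDegree_C_mul_X_pow_le _ _).trans hmk))
    have h0' : (Q + C c * X ^ m).eval 0 = 1 := by simp [h0, zero_pow (by omega : m ≠ 0)]
    have := hmin _ hdeg' h0'
    simp only [eval_add, eval_mul, eval_C, eval_pow, eval_X] at this
    rw [← sub_nonneg, ← sum_sub_distrib] at this
    convert this using 1
    simp only [mul_sum, sum_mul, add_zero, ← sum_add_distrib]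
    exact sum_congr rfl fun t _ => by ring
  have := discrim_le_zero hquad
  rw [discrim] at this
  nlinarith [sq_nonneg (∑ t, w t * lam t ^ m * Q.eval (lam t))]

lemma eq_zero_of_forall_sum_mul_pow_mul_eval_eq_zero (hinj : Function.Injective lam)
    (hw : ∀ j, 0 < w j) {k : ℕ} (hk : k < Fintype.card ι) {D : ℝ[X]} (hdeg : D.natDegree ≤ k)
    (h0 : D.eval 0 = 0)
    (horth : ∀ m, 1 ≤ m → m ≤ k → ∑ t, w t * lam t ^ m * D.eval (lam t) = 0) : D = 0 := by
  have hsq : ∑ t, w t * D.eval (lam t) ^ 2 = 0 := by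
    calc ∑ t, w t * D.eval (lam t) ^ 2
        = ∑ t, ∑ m ∈ range (k + 1), D.coeff m * (w t * lam t ^ m * D.eval (lam t)) :=
          sum_congr rfl fun t _ => by
            have hexp := eval_eq_sum_range' (Nat.lt_succ_of_le hdeg) (lam t)
            calc w t * D.eval (lam t) ^ 2
                = (∑ m ∈ range (k + 1), D.coeff m * lam t ^ m) * (w t * D.eval (lam t)) := by
                  rw [← hexp]; ring
              _ = _ := by rw [sum_mul]; exact sum_congr rfl fun m _ => by ring
      _ = ∑ m ∈ range (k + 1), D.coeff m * ∑ t, w t * lam t ^ m * D.eval (lam t) := by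
          rw [sum_comm]; simp only [mul_sum]
      _ = 0 := sum_eq_zero fun m hm => by
          rcases Nat.eq_zero_or_pos m with rfl | hm1
          · rw [coeff_zero_eq_eval_zero, h0, zero_mul]
          · rw [horth m hm1 (Nat.lt_succ_iff.1 (mem_range.1 hm)), mul_zero]
  have hnodes : ∀ t, D.eval (lam t) = 0 := fun t => by
    have := (sum_eq_zero_iff_of_nonneg fun t _ => by have := hw t; positivity).1 hsq t
      (mem_univ t)
    simpa [(hw t).ne'] using this
  exact eq_zero_of_natDegree_lt_card_of_eval_eq_zero D hinj hnodes (by omega)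

end Heine

section Orthogonality

variable {ι : Type*} [DecidableEq ι] (lam w : ι → ℝ)

lemma eval_basis_zero (S : Finset ι) (j : ι) :
    (Lagrange.basis S lam j).eval 0 = ∏ x ∈ S.erase j, lam x / (lam x - lam j) := by
  simp only [Lagrange.basis, Lagrange.basisDivisor, eval_prod, eval_mul, eval_C, eval_sub, eval_X]
  refine prod_congr rfl fun x _ => ?_
  rw [div_eq_mul_inv, ← neg_sub, inv_neg]
  ring

lemma sum_pow_mul_eval_basis_zero {S : Finset ι} (hinj : Set.InjOn lam S) {m : ℕ} (hm1 : 1 ≤ m)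
    (hm : m < #S) : ∑ j ∈ S, lam j ^ m * (Lagrange.basis S lam j).eval 0 = 0 := by
  have h := congrArg (eval 0) (Lagrange.eq_interpolate hinj (f := X ^ m)
    (by rw [degree_X_pow]; exact_mod_cast hm))
  simpa [Lagrange.interpolate_apply, eval_finsetSum, zero_pow (by omega : m ≠ 0)] using h.symm

lemma sqVandermonde_insert {a : ι} {s : Finset ι} (ha : a ∉ s) :
    sqVandermonde lam (insert a s) = sqVandermonde lam s * ∏ x ∈ s, (lam x - lam a) ^ 2 := by
  have hd₁ : Disjoint (s.offDiag ∪ {a} ×ˢ s) (s ×ˢ {a}) := by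
    simp only [disjoint_left, mem_union, mem_offDiag, mem_product, mem_singleton]
    rintro ⟨x, y⟩ (h | h) h'
    · exact ha (h'.2 ▸ h.2.1)
    · exact ha (h'.2 ▸ h.2)
  have hd₂ : Disjoint s.offDiag ({a} ×ˢ s) := by
    simp only [disjoint_left, mem_offDiag, mem_product, mem_singleton]
    rintro ⟨x, y⟩ h h'
    exact ha (h'.1 ▸ h.1)
  rw [sqVandermonde, offDiag_insert ha, prod_union hd₁, prod_union hd₂, prod_product,
    prod_product]
  simp only [prod_singleton]
  rw [mul_assoc, ← prod_mul_distrib]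
  congr 1
  refine prod_congr rfl fun x _ => ?_
  rw [abs_sub_comm (lam a), ← abs_mul, ← sq, abs_sq]

lemma mul_heineWeight_erase_mul_eval (hinj : Function.Injective lam) (hlam : ∀ j, lam j ≠ 0)
    {S : Finset ι} {j : ι} (hj : j ∈ S) :
    w j * heineWeight lam w (S.erase j) * (nodePoly lam (S.erase j)).eval (lam j) =
      (∏ x ∈ S, w x) * sqVandermonde lam S * (Lagrange.basis S lam j).eval 0 := by
  have hV : sqVandermonde lam S =
      sqVandermonde lam (S.erase j) * ∏ x ∈ S.erase j, (lam x - lam j) ^ 2 := by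
    conv_lhs => rw [← insert_erase hj]
    exact sqVandermonde_insert lam (notMem_erase j S)
  have hfactor : ∀ x ∈ S.erase j, w x * lam x ^ 2 * (1 - (lam x)⁻¹ * lam j) =
      w x * ((lam x - lam j) ^ 2 * (lam x / (lam x - lam j))) := by
    intro x hx
    have hxj : lam x - lam j ≠ 0 := sub_ne_zero.2 fun h => ne_of_mem_erase hx (hinj h)
    have := hlam x
    field_simp
  have hlhs : w j * heineWeight lam w (S.erase j) * (nodePoly lam (S.erase j)).eval (lam j) =
      w j * (∏ x ∈ S.erase j, w x * lam x ^ 2 * (1 - (lam x)⁻¹ * lam j)) *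
        sqVandermonde lam (S.erase j) := by
    simp only [heineWeight, eval_nodePoly, prod_mul_distrib]; ring
  have hrhs : (∏ x ∈ S, w x) * sqVandermonde lam S * (Lagrange.basis S lam j).eval 0 =
      w j * (∏ x ∈ S.erase j, w x * ((lam x - lam j) ^ 2 * (lam x / (lam x - lam j)))) *
        sqVandermonde lam (S.erase j) := by
    rw [eval_basis_zero, hV, ← mul_prod_erase S w hj, prod_mul_distrib, prod_mul_distrib]; ring
  rw [hlhs, hrhs, prod_congr rfl hfactor]

lemma sum_mul_pow_mul_heineWeight_erase_eq_zero (hinj : Function.Injective lam)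
    (hlam : ∀ j, lam j ≠ 0) (S : Finset ι) {m : ℕ} (hm1 : 1 ≤ m) (hm : m < #S) :
    ∑ j ∈ S, w j * lam j ^ m * heineWeight lam w (S.erase j) *
      (nodePoly lam (S.erase j)).eval (lam j) = 0 := by
  calc _ = (∏ x ∈ S, w x) * sqVandermonde lam S *
        ∑ j ∈ S, lam j ^ m * (Lagrange.basis S lam j).eval 0 := by
        rw [mul_sum]
        refine sum_congr rfl fun j hj => ?_
        linear_combination lam j ^ m * mul_heineWeight_erase_mul_eval lam w hinj hlam hj
    _ = 0 := by rw [sum_pow_mul_eval_basis_zero lam hinj.injOn hm1 hm, mul_zero]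

variable [Fintype ι]

lemma sum_powersetCard_sum_compl {β : Type*} [AddCommMonoid β] (k : ℕ) (F : Finset ι → ι → β) :
    ∑ s ∈ powersetCard k univ, ∑ t ∈ sᶜ, F s t =
      ∑ S ∈ powersetCard (k + 1) univ, ∑ t ∈ S, F (S.erase t) t := by
  rw [sum_sigma', sum_sigma']
  refine sum_nbij' (fun p => ⟨insert p.2 p.1, p.2⟩) (fun p => ⟨p.1.erase p.2, p.2⟩) ?_ ?_ ?_ ?_ ?_
  all_goals
    rintro ⟨s, t⟩ hp
    simp only [mem_sigma, mem_powersetCard, subset_univ, true_and, mem_compl] at hp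
  · simp [card_insert_of_notMem hp.2, hp.1]
  · simp [card_erase_of_mem hp.2, hp.1, hp.2]
  · simp [erase_insert hp.2]
  · simp [insert_erase hp.2]
  · simp [erase_insert hp.2]

/- Terms `(s, t)` with `t ∈ s` vanish; the others regroup over `S = insert t s` into the sums
killed by `sum_mul_pow_mul_heineWeight_erase_eq_zero`. -/
lemma sum_mul_pow_mul_eval_heinePoly (hinj : Function.Injective lam) (hlam : ∀ j, lam j ≠ 0)
    {k m : ℕ} (hm1 : 1 ≤ m) (hmk : m ≤ k) :
    ∑ t, w t * lam t ^ m * (heinePoly lam w k).eval (lam t) = 0 := by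
  set Z := ∑ t ∈ powersetCard k univ, heineWeight lam w t
  let F : Finset ι → ι → ℝ := fun s t =>
    w t * lam t ^ m * heineWeight lam w s * (nodePoly lam s).eval (lam t)
  have hsupport : ∀ s, ∑ t, F s t = ∑ t ∈ sᶜ, F s t := fun s =>
    (sum_subset (subset_univ _) fun t _ ht => by
      simp [F, eval_nodePoly_of_mem lam (not_not.1 (mem_compl.not.1 ht)) (hlam t)]).symm
  calc ∑ t, w t * lam t ^ m * (heinePoly lam w k).eval (lam t)
      = Z⁻¹ * ∑ s ∈ powersetCard k univ, ∑ t, F s t := by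
        simp only [eval_heinePoly, mul_sum, sum_comm (γ := ι)]
        refine sum_congr rfl fun s _ => sum_congr rfl fun t _ => ?_
        simp only [F]; ring
    _ = Z⁻¹ * ∑ S ∈ powersetCard (k + 1) univ, ∑ t ∈ S, F (S.erase t) t := by
        simp only [hsupport, sum_powersetCard_sum_compl]
    _ = 0 := by
        rw [sum_eq_zero fun S hS => sum_mul_pow_mul_heineWeight_erase_eq_zero lam w hinj hlam S
          hm1 (by rw [(mem_powersetCard.1 hS).2]; omega), mul_zero]

lemma IsMinResidual.eq_heinePoly (hinj : Function.Injective lam) (hlam : ∀ j, lam j ≠ 0)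
    (hw : ∀ j, 0 < w j) {k : ℕ} (hk : k < Fintype.card ι) {Q : ℝ[X]}
    (hQ : IsMinResidual lam w k Q) : Q = heinePoly lam w k := by
  rw [← sub_eq_zero]
  refine eq_zero_of_forall_sum_mul_pow_mul_eval_eq_zero lam w hinj hw hk
    ((natDegree_sub_le _ _).trans (max_le hQ.1 (natDegree_heinePoly_le lam w k))) ?_
    fun m hm1 hmk => ?_
  · rw [eval_sub, hQ.2.1, eval_heinePoly_zero lam w hinj hlam hw hk.le, sub_self]
  · simp only [eval_sub, mul_sub, sum_sub_distrib, hQ.sum_mul_pow_mul_eval hm1 hmk,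
      sum_mul_pow_mul_eval_heinePoly lam w hinj hlam hm1 hmk, sub_zero]

end Orthogonality

end ResidualPolynomial

section Spectral

variable {ι : Type*} [Fintype ι] [DecidableEq ι] {u : ι → ι → ℝ}

lemma sum_dotProduct_smul_of_orthonormal (hortho : ∀ i j, u i ⬝ᵥ u j = if i = j then 1 else 0)
    (v : ι → ℝ) : ∑ j, (u j ⬝ᵥ v) • u j = v := by
  have hU : Matrix.of u * (Matrix.of u)ᵀ = 1 := by
    ext a b
    simpa [Matrix.mul_apply, Matrix.one_apply, dotProduct] using hortho a b
  calc ∑ j, (u j ⬝ᵥ v) • u j = (v ᵥ* (Matrix.of u)ᵀ) ᵥ* Matrix.of u := by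
        rw [vecMul_eq_sum, vecMul_transpose]; rfl
    _ = v := by rw [vecMul_vecMul, mul_eq_one_comm.1 hU, vecMul_one]

lemma sum_smul_dotProduct_self_of_orthonormal
    (hortho : ∀ i j, u i ⬝ᵥ u j = if i = j then 1 else 0) (c : ι → ℝ) :
    (∑ j, c j • u j) ⬝ᵥ (∑ j, c j • u j) = ∑ j, c j ^ 2 := by
  simp [sum_dotProduct, dotProduct_sum, hortho, sq]

lemma mulVec_eq_smul_of_eq_sum_vecMulVec (hortho : ∀ i j, u i ⬝ᵥ u j = if i = j then 1 else 0)
    {M : Matrix ι ι ℝ} {lam : ι → ℝ} (hspec : M = ∑ i, lam i • vecMulVec (u i) (u i)) (j : ι) :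
    M *ᵥ u j = lam j • u j := by
  simp [hspec, sum_mulVec, smul_mulVec, vecMulVec_mulVec, hortho]

lemma aeval_mulVec_eq_smul {M : Matrix ι ι ℝ} {x : ι → ℝ} {μ : ℝ} (h : M *ᵥ x = μ • x)
    (Q : ℝ[X]) : aeval M Q *ᵥ x = Q.eval μ • x := by
  have := Module.End.aeval_apply_of_mem_apply_eq_smul (p := Q) (f := Matrix.toLinAlgEquiv' M)
    (x := x) (by simpa using h)
  rwa [Polynomial.aeval_algHom_apply, Matrix.toLinAlgEquiv'_apply] at this

lemma sum_sq_aeval_mulVec (hortho : ∀ i j, u i ⬝ᵥ u j = if i = j then 1 else 0)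
    {M : Matrix ι ι ℝ} {lam : ι → ℝ} (hspec : M = ∑ i, lam i • vecMulVec (u i) (u i))
    (Q : ℝ[X]) (v : ι → ℝ) :
    ∑ i, (aeval M Q *ᵥ v) i ^ 2 = ∑ j, (u j ⬝ᵥ v) ^ 2 * Q.eval (lam j) ^ 2 := by
  have hAv : aeval M Q *ᵥ v = ∑ j, ((u j ⬝ᵥ v) * Q.eval (lam j)) • u j := by
    conv_lhs => rw [← sum_dotProduct_smul_of_orthonormal hortho v]
    simp only [mulVec_sum, mulVec_smul,
      aeval_mulVec_eq_smul (mulVec_eq_smul_of_eq_sum_vecMulVec hortho hspec _), smul_smul]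
  calc ∑ i, (aeval M Q *ᵥ v) i ^ 2 = (aeval M Q *ᵥ v) ⬝ᵥ (aeval M Q *ᵥ v) := by
        simp only [dotProduct, sq]
    _ = _ := by simp only [hAv, sum_smul_dotProduct_self_of_orthonormal hortho, mul_pow]

lemma ResidualPolynomial.isMinResidual_of_sum_sq_aeval_mulVec_le
    (hortho : ∀ i j, u i ⬝ᵥ u j = if i = j then 1 else 0)
    {M : Matrix ι ι ℝ} {lam : ι → ℝ} (hspec : M = ∑ i, lam i • vecMulVec (u i) (u i))
    {v : ι → ℝ} {k : ℕ} {Q : ℝ[X]} (hdeg : Q.natDegree ≤ k) (h0 : Q.eval 0 = 1)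
    (hmin : ∀ P : ℝ[X], P.natDegree ≤ k → P.eval 0 = 1 →
      ∑ i, (aeval M Q *ᵥ v) i ^ 2 ≤ ∑ i, (aeval M P *ᵥ v) i ^ 2) :
    IsMinResidual lam (fun j => (u j ⬝ᵥ v) ^ 2) k Q :=
  ⟨hdeg, h0, fun P hP hP0 => by simpa only [sum_sq_aeval_mulVec hortho hspec] using hmin P hP hP0⟩

end Spectral

lemma Finset.exists_strictAnti_prod_eq {α β : Type*} [LinearOrder α] [CommMonoid β]
    {s : Finset α} {k : ℕ} (hs : #s = k) :
    ∃ j : Fin k → α, StrictAnti j ∧ ∀ f : α → β, ∏ l, f (j l) = ∏ x ∈ s, f x := by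
  refine ⟨fun l => s.orderEmbOfFin hs l.rev, fun a b hab => by simpa using hab, fun f => ?_⟩
  calc ∏ l, f (s.orderEmbOfFin hs l.rev) = ∏ l, f (s.orderEmbOfFin hs l) :=
        Fintype.prod_equiv Fin.revPerm _ _ fun _ => rfl
    _ = ∏ x ∈ s, f x := by
        conv_rhs => rw [← map_orderEmbOfFin_univ s hs, prod_map]
        rfl

lemma bddAbove_setOf_exists_and_eq {α : Type*} [Finite α] (P : α → Prop) (F : α → ℝ) :
    BddAbove {r | ∃ j, P j ∧ r = F j} :=
  ((Set.finite_range F).subset (by rintro r ⟨j, -, rfl⟩; exact ⟨j, rfl⟩)).bddAbove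

open ResidualPolynomial in
theorem stmt17_general {n p : ℕ} (X : Matrix (Fin n) (Fin p) ℝ)
    (βstar : Fin p → ℝ) (Y : Fin n → ℝ)
    (lam : Fin n → ℝ) (u : Fin n → Fin n → ℝ)
    (hortho : ∀ i j, u i ⬝ᵥ u j = if i = j then (1 : ℝ) else 0)
    (hspec : X * Xᵀ = ∑ i, lam i • vecMulVec (u i) (u i))
    (hanti : StrictAnti lam) (hpos : ∀ i, 0 < lam i)
    (hp : ∀ i, u i ⬝ᵥ (X *ᵥ βstar) ≠ 0)
    (hphat : ∀ i, u i ⬝ᵥ Y ≠ 0)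
    (Qhat Qstar : ℕ → Polynomial ℝ)
    (hQhatmem : ∀ k, 1 ≤ k → k < n → (Qhat k).natDegree ≤ k ∧ (Qhat k).eval 0 = 1)
    (hQhatmin : ∀ k, 1 ≤ k → k < n → ∀ Q : Polynomial ℝ, Q.natDegree ≤ k → Q.eval 0 = 1 →
      ∑ i, (((Polynomial.aeval (X * Xᵀ)) (Qhat k) *ᵥ Y) i) ^ 2 ≤
        ∑ i, (((Polynomial.aeval (X * Xᵀ)) Q *ᵥ Y) i) ^ 2)
    (hQstarmem : ∀ k, 1 ≤ k → k < n → (Qstar k).natDegree ≤ k ∧ (Qstar k).eval 0 = 1)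
    (hQstarmin : ∀ k, 1 ≤ k → k < n → ∀ Q : Polynomial ℝ, Q.natDegree ≤ k → Q.eval 0 = 1 →
      ∑ i, (((Polynomial.aeval (X * Xᵀ)) (Qstar k) *ᵥ (X *ᵥ βstar)) i) ^ 2 ≤
        ∑ i, (((Polynomial.aeval (X * Xᵀ)) Q *ᵥ (X *ᵥ βstar)) i) ^ 2)
    (k : ℕ) (hk1 : 1 ≤ k) (hkn : k < n) (i : Fin n) :
    |(Qhat k).eval (lam i) - (Qstar k).eval (lam i)| ≤
      2 * sSup {r : ℝ | ∃ j : Fin k → Fin n, StrictAnti j ∧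
            r = |1 - (∏ l, (u (j l) ⬝ᵥ Y) ^ 2) / (∏ l, (u (j l) ⬝ᵥ (X *ᵥ βstar)) ^ 2)|}
        * sSup {r : ℝ | ∃ j : Fin k → Fin n, StrictAnti j ∧
            r = ∏ l, |lam i / lam (j l) - 1|} := by
  have hinj := hanti.injective
  have hlam : ∀ j, lam j ≠ 0 := fun j => (hpos j).ne'
  have hheine : ∀ v : Fin n → ℝ, (∀ j, u j ⬝ᵥ v ≠ 0) → ∀ Q : ℝ[X],
      IsMinResidual lam (fun j => (u j ⬝ᵥ v) ^ 2) k Q →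
        Q = heinePoly lam (fun j => (u j ⬝ᵥ v) ^ 2) k := fun v hv Q hQ =>
    hQ.eq_heinePoly lam _ hinj hlam (fun j => by have := hv j; positivity) (by simpa using hkn)
  rw [hheine Y hphat _ (isMinResidual_of_sum_sq_aeval_mulVec_le hortho hspec
      (hQhatmem k hk1 hkn).1 (hQhatmem k hk1 hkn).2 (hQhatmin k hk1 hkn)),
    hheine _ hp _ (isMinResidual_of_sum_sq_aeval_mulVec_le hortho hspec
      (hQstarmem k hk1 hkn).1 (hQstarmem k hk1 hkn).2 (hQstarmin k hk1 hkn))]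
  refine abs_eval_heinePoly_sub_le lam _ hinj hlam (fun j => by have := hphat j; positivity)
    (fun j => by have := hp j; positivity) (by simpa using hkn.le) (lam i)
    (fun s hs => ?_) (fun s hs => ?_)
  all_goals obtain ⟨j, hj, hprod⟩ := exists_strictAnti_prod_eq (β := ℝ) (mem_powersetCard.1 hs).2
  · exact le_csSup (bddAbove_setOf_exists_and_eq _ _) ⟨j, hj, by rw [← hprod, ← hprod]⟩
  · exact le_csSup (bddAbove_setOf_exists_and_eq _ _)
      ⟨j, hj, by rw [abs_eval_nodePoly, ← hprod]⟩

/-- the noisy and noise-free minimizing residual polynomials satisfy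
|Q̂_k(λ_i) − Q*_k(λ_i)| ≤ 2 · max_{I_k^+} |1 − (p̂_{j_1}²⋯p̂_{j_k}²)/(p_{j_1}²⋯p_{j_k}²)|
· max_{I_k^+} ∏_l |λ_i/λ_{j_l} − 1| (maxima over strictly decreasing k-tuples,
expressed as suprema of the corresponding finite sets of values). -/
theorem stmt17 {n p : ℕ} (X : Matrix (Fin n) (Fin p) ℝ)
    (βstar : Fin p → ℝ) (ε : Fin n → ℝ) (Y : Fin n → ℝ)
    (hY : Y = X *ᵥ βstar + ε)
    (lam : Fin n → ℝ) (u : Fin n → Fin n → ℝ)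
    (hortho : ∀ i j, u i ⬝ᵥ u j = if i = j then (1 : ℝ) else 0)
    (hspec : X * Xᵀ = ∑ i, lam i • vecMulVec (u i) (u i))
    (hanti : StrictAnti lam) (hpos : ∀ i, 0 < lam i)
    (hp : ∀ i, u i ⬝ᵥ (X *ᵥ βstar) ≠ 0)
    (hphat : ∀ i, u i ⬝ᵥ Y ≠ 0)
    (Qhat Qstar : ℕ → Polynomial ℝ)
    (hQhatmem : ∀ k, 1 ≤ k → k < n → (Qhat k).natDegree ≤ k ∧ (Qhat k).eval 0 = 1)
    (hQhatmin : ∀ k, 1 ≤ k → k < n → ∀ Q : Polynomial ℝ, Q.natDegree ≤ k → Q.eval 0 = 1 →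
      ∑ i, (((Polynomial.aeval (X * Xᵀ)) (Qhat k) *ᵥ Y) i) ^ 2 ≤
        ∑ i, (((Polynomial.aeval (X * Xᵀ)) Q *ᵥ Y) i) ^ 2)
    (hQstarmem : ∀ k, 1 ≤ k → k < n → (Qstar k).natDegree ≤ k ∧ (Qstar k).eval 0 = 1)
    (hQstarmin : ∀ k, 1 ≤ k → k < n → ∀ Q : Polynomial ℝ, Q.natDegree ≤ k → Q.eval 0 = 1 →
      ∑ i, (((Polynomial.aeval (X * Xᵀ)) (Qstar k) *ᵥ (X *ᵥ βstar)) i) ^ 2 ≤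
        ∑ i, (((Polynomial.aeval (X * Xᵀ)) Q *ᵥ (X *ᵥ βstar)) i) ^ 2)
    (k : ℕ) (hk1 : 1 ≤ k) (hkn : k < n) (i : Fin n) :
    |(Qhat k).eval (lam i) - (Qstar k).eval (lam i)| ≤
      2 * sSup {r : ℝ | ∃ j : Fin k → Fin n, StrictAnti j ∧
            r = |1 - (∏ l, (u (j l) ⬝ᵥ Y) ^ 2) / (∏ l, (u (j l) ⬝ᵥ (X *ᵥ βstar)) ^ 2)|}
        * sSup {r : ℝ | ∃ j : Fin k → Fin n, StrictAnti j ∧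
            r = ∏ l, |lam i / lam (j l) - 1|} :=
  stmt17_general X βstar Y lam u hortho hspec hanti hpos hp hphat Qhat Qstar hQhatmem hQhatmin
    hQstarmem hQstarmin k hk1 hkn i
end

section
/- There exist universal constants C > 1 and C̃ > 0 with the following property. Assume the noise coordinates ε_1, …, ε_n are i.i.d. N(0, 1/n), assume min_{1≤i≤n} p_i² ≥ L for some L > 0, and let 1 ≤ k < n. Then with probability at least 1 − n^{1−C}, every minimizer β̂_k of ‖Y − Xβ‖² over the Krylov subspace K^k(XᵀX, XᵀY) satisfies (1/n)‖Xβ* − Xβ̂_k‖² ≤ C̃ · { [ ρ^{2k} + (log n/(nL)) · (1 + ρ^{2k}) ] · (1/n)‖Xβ*‖² + (k²/L) · (log n / n²) · (1 + C√(log n/(nL)))² · ‖Xβ*‖²_W }, where ρ = (√(λ_1/λ_n) − 1)/(√(λ_1/λ_n) + 1), and ‖Xβ*‖²_W = Σ_{i=1}^n ( max_{(j_1,…,j_k)∈I_k^+} ∏_{l=1}^k |λ_i/λ_{j_l} − 1|² ) · p_i². -/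
open Matrix Polynomial MeasureTheory ProbabilityTheory
open scoped NNReal

/-!
If `r` is a polynomial of degree `≤ k` with `r 0 = 1`, then `Y - r(XXᵀ) Y = Xβ` for some `β` in
the Krylov subspace, and in the eigenbasis of `XXᵀ` the residual `r(XXᵀ) Y` has coordinates
`r(λᵢ) ⟨uᵢ, Y⟩`. The Chebyshev polynomial of `[λₙ, λ₁]` normalised at `0` is bounded by `2ρᵏ` on the
spectrum, so the least-squares fit satisfies `‖Y - Xβ̂ₖ‖² ≤ 4ρ²ᵏ‖Y‖²`, and splitting
`Y = Xβ* + ε` gives `‖Xβ* - Xβ̂ₖ‖² ≤ 18‖ε‖² + 16ρ²ᵏ‖Xβ*‖²`. The noise coordinates are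
sub-Gaussian with variance proxy `1/n`, so a union bound gives `‖ε‖² ≤ 6 log n` with probability
at least `1 - 1/n`, and `‖Xβ*‖² = ∑ pᵢ² ≥ nL` converts `log n / n` into
`log n / (nL) · ‖Xβ*‖² / n`. This proves the bound with `C = 2`, `C̃ = 108`, without the
nonnegative `‖Xβ*‖²_W` term.
-/

open Polynomial.Chebyshev in
lemma pow_div_two_le_eval_chebyshevT {y : ℝ} (hy : 0 < y) (k : ℕ) :
    y ^ k / 2 ≤ (T ℝ k).eval ((y + y⁻¹) / 2) := by
  have hcosh : (y + y⁻¹) / 2 = Real.cosh (Real.log y) := by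
    rw [Real.cosh_eq, Real.exp_neg, Real.exp_log hy]
  have hexp : Real.exp (k * Real.log y) = y ^ k := by
    rw [Real.exp_nat_mul, Real.exp_log hy]
  rw [hcosh, T_real_cosh, Int.cast_natCast, Real.cosh_eq, hexp]
  linarith [Real.exp_pos (-(k * Real.log y))]

noncomputable def chebyshevRate (κ : ℝ) : ℝ := (√κ - 1) / (√κ + 1)

lemma chebyshevRate_nonneg {κ : ℝ} (hκ : 1 ≤ κ) : 0 ≤ chebyshevRate κ := by
  have : 1 ≤ √κ := Real.one_le_sqrt.2 hκ
  unfold chebyshevRate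
  apply div_nonneg <;> linarith

lemma chebyshevRate_lt_one (κ : ℝ) : chebyshevRate κ < 1 := by
  have := Real.sqrt_nonneg κ
  unfold chebyshevRate
  rw [div_lt_one (by linarith)]
  linarith

open Polynomial.Chebyshev in
/-- Rescaled Chebyshev polynomial: `T_k` composed with the affine map sending `[a, b]` onto
`[-1, 1]`, normalised to take the value `1` at the origin. -/
theorem exists_eval_zero_eq_one_abs_eval_le {a b : ℝ} (ha : 0 < a) (hab : a < b) (k : ℕ) :
    ∃ r : ℝ[X], r.natDegree ≤ k ∧ r.eval 0 = 1 ∧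
      ∀ x ∈ Set.Icc a b, |r.eval x| ≤ 2 * chebyshevRate (b / a) ^ k := by
  set s := √(b / a)
  have hs : 1 < s := Real.lt_sqrt_of_sq_lt (by rw [one_pow, one_lt_div ha]; exact hab)
  have hb : b = a * s ^ 2 := by
    rw [Real.sq_sqrt (div_pos (ha.trans hab) ha).le]; field_simp
  set y := (s + 1) / (s - 1)
  have hy : 0 < y := div_pos (by linarith) (by linarith)
  have hyρ : y⁻¹ = chebyshevRate (b / a) := inv_div _ _
  have hba : 0 < b - a := by linarith
  set c := (b + a) / (b - a)
  have hc : c = (y + y⁻¹) / 2 := by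
    have h1 : s - 1 ≠ 0 := by linarith
    have h2 : s + 1 ≠ 0 := by linarith
    have h3 : s ^ 2 - 1 ≠ 0 := by nlinarith
    simp only [c, y, hb, inv_div]
    field_simp
    ring
  set d := (T ℝ k).eval c
  have hd : y ^ k / 2 ≤ d := by simpa only [d, hc] using pow_div_two_le_eval_chebyshevT hy k
  have hd0 : 0 < d := lt_of_lt_of_le (by positivity) hd
  set φ : ℝ[X] := C (-2 / (b - a)) * X + C c
  have hφ : ∀ x, φ.eval x = (b + a - 2 * x) / (b - a) := fun x => by
    simp only [φ, c, eval_add, eval_mul, eval_C, eval_X]; field_simp; ring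
  refine ⟨C d⁻¹ * (T ℝ k).comp φ, ?_, ?_, fun x hx => ?_⟩
  · calc (C d⁻¹ * (T ℝ k).comp φ).natDegree ≤ (T ℝ k).natDegree * φ.natDegree :=
          (natDegree_C_mul_le _ _).trans natDegree_comp_le
      _ ≤ k * 1 := Nat.mul_le_mul (by rw [natDegree_T]; simp) natDegree_linear_le
      _ = k := mul_one k
  · rw [eval_mul, eval_C, eval_comp, hφ, mul_zero, sub_zero]
    exact inv_mul_cancel₀ hd0.ne'
  · have hφx : |φ.eval x| ≤ 1 := by
      rw [hφ, abs_div, abs_of_pos hba, div_le_one hba, abs_le]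
      constructor <;> linarith [hx.1, hx.2]
    calc |(C d⁻¹ * (T ℝ k).comp φ).eval x| = d⁻¹ * |(T ℝ k).eval (φ.eval x)| := by
          rw [eval_mul, eval_C, eval_comp, abs_mul, abs_of_pos (inv_pos.2 hd0)]
      _ ≤ d⁻¹ := mul_le_of_le_one_right (inv_pos.2 hd0).le (abs_eval_T_real_le_one _ hφx)
      _ ≤ (y ^ k / 2)⁻¹ := inv_anti₀ (by positivity) hd
      _ = 2 * chebyshevRate (b / a) ^ k := by rw [← hyρ, inv_pow, inv_div, div_eq_mul_inv]

section MatrixPolynomial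

variable {R : Type*} [CommRing R] {m : Type*} [Fintype m] [DecidableEq m]

lemma vecMul_aeval_eq_smul {M : Matrix m m R} {x : m → R} {μ : R} (hx : x ᵥ* M = μ • x)
    (p : R[X]) : x ᵥ* aeval M p = p.eval μ • x := by
  induction p using Polynomial.induction_on with
  | C a => simp [Algebra.algebraMap_eq_smul_one, vecMul_smul]
  | add p q hp hq => simp [vecMul_add, hp, hq, add_smul]
  | monomial j a h =>
    rw [pow_succ, ← mul_assoc, map_mul (aeval M) (C a * X ^ j) X, aeval_X, ← vecMul_vecMul, h,
      smul_vecMul, hx, smul_smul, eval_mul_X]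

variable {n : Type*} [Fintype n] [DecidableEq n]

lemma mul_aeval_transpose_mul (X : Matrix m n R) (p : R[X]) :
    X * aeval (Xᵀ * X) p = aeval (X * Xᵀ) p * X := by
  induction p using Polynomial.induction_on with
  | C a => simp [Algebra.algebraMap_eq_smul_one]
  | add p q hp hq => rw [map_add, map_add, Matrix.mul_add, Matrix.add_mul, hp, hq]
  | monomial j a h =>
    rw [pow_succ, ← mul_assoc, map_mul (aeval _) _ Polynomial.X, map_mul (aeval _) _ Polynomial.X,
      aeval_X, aeval_X, ← Matrix.mul_assoc, h]
    simp only [Matrix.mul_assoc]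

def krylovSubspace (A : Matrix m m R) (w : m → R) (k : ℕ) : Submodule R (m → R) :=
  Submodule.span R {v | ∃ j < k, v = (A ^ j) *ᵥ w}

lemma aeval_mulVec_mem_krylovSubspace (A : Matrix m m R) (w : m → R) {k : ℕ} {p : R[X]}
    (hp : p.degree < k) : aeval A p *ᵥ w ∈ krylovSubspace A w k := by
  rcases eq_or_ne p 0 with rfl | hp0
  · simp
  rw [aeval_eq_sum_range' ((natDegree_lt_iff_degree_lt hp0).2 hp), sum_mulVec]
  exact Submodule.sum_mem _ fun j hj => by
    rw [smul_mulVec]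
    exact Submodule.smul_mem _ _ (Submodule.subset_span ⟨j, Finset.mem_range.1 hj, rfl⟩)

/-- Write `r = 1 - X * h` with `deg h < k` and take `β = h(XᵀX) Xᵀ Y`; then
`X β = h(XXᵀ) XXᵀ Y = (1 - r)(XXᵀ) Y`. -/
lemma exists_mem_krylovSubspace_sub_mulVec_eq (X : Matrix m n R) (Y : m → R) {k : ℕ}
    {r : R[X]} (hr : r.natDegree ≤ k) (hr0 : r.eval 0 = 1) :
    ∃ β ∈ krylovSubspace (Xᵀ * X) (Xᵀ *ᵥ Y) k, Y - X *ᵥ β = aeval (X * Xᵀ) r *ᵥ Y := by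
  obtain ⟨h, hh⟩ : Polynomial.X ∣ 1 - r := by
    rw [X_dvd_iff, coeff_zero_eq_eval_zero, eval_sub, eval_one, hr0, sub_self]
  have hdeg : h.degree < k := by
    nontriviality R
    rcases eq_or_ne h 0 with rfl | h0
    · simp
    have : (Polynomial.X * h).natDegree ≤ k := by
      rw [← hh]; exact (natDegree_sub_le _ _).trans (by simpa using hr)
    rw [natDegree_X_mul h0] at this
    exact degree_le_natDegree.trans_lt (by exact_mod_cast this)
  refine ⟨aeval (Xᵀ * X) h *ᵥ (Xᵀ *ᵥ Y), aeval_mulVec_mem_krylovSubspace _ _ hdeg, ?_⟩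
  have hr' : r = 1 - h * Polynomial.X := by rw [mul_comm, ← hh]; ring
  rw [mulVec_mulVec, mulVec_mulVec, mul_aeval_transpose_mul,
    Matrix.mul_assoc, hr', map_sub, map_one, map_mul, aeval_X, sub_mulVec, one_mulVec]

section Orthonormal

variable {u : m → m → R}

lemma sum_sq_dotProduct_eq_of_orthonormal (hu : ∀ i j, u i ⬝ᵥ u j = if i = j then 1 else 0)
    (v : m → R) : ∑ i, (u i ⬝ᵥ v) ^ 2 = ∑ a, v a ^ 2 := by
  set U : Matrix m m R := Matrix.of u
  have hUUt : U * Uᵀ = 1 := by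
    ext i j
    simpa [U, mul_apply, one_apply, dotProduct] using hu i j
  calc ∑ i, (u i ⬝ᵥ v) ^ 2 = (U *ᵥ v) ⬝ᵥ (U *ᵥ v) := by simp [dotProduct, sq, U, mulVec]
    _ = v ⬝ᵥ v := by
      rw [dotProduct_mulVec, ← vecMul_transpose, vecMul_vecMul, mul_eq_one_comm.1 hUUt,
        vecMul_one]
    _ = ∑ a, v a ^ 2 := by simp [dotProduct, sq]

lemma vecMul_eq_smul_of_eq_sum_vecMulVec (hu : ∀ i j, u i ⬝ᵥ u j = if i = j then 1 else 0)
    {M : Matrix m m R} {lam : m → R} (hM : M = ∑ i, lam i • vecMulVec (u i) (u i)) (i : m) :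
    u i ᵥ* M = lam i • u i := by
  simp [hM, vecMul_sum, vecMul_smul, vecMul_vecMulVec, hu]

end Orthonormal

end MatrixPolynomial

lemma sum_sq_aeval_mulVec_le {m : Type*} [Fintype m] [DecidableEq m] {u : m → m → ℝ}
    (hu : ∀ i j, u i ⬝ᵥ u j = if i = j then 1 else 0) {M : Matrix m m ℝ} {lam : m → ℝ}
    (hM : M = ∑ i, lam i • vecMulVec (u i) (u i)) {p : ℝ[X]} {c : ℝ}
    (hc : ∀ i, |p.eval (lam i)| ≤ c) (v : m → ℝ) :
    ∑ a, (aeval M p *ᵥ v) a ^ 2 ≤ c ^ 2 * ∑ a, v a ^ 2 := by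
  have hcoord i : u i ⬝ᵥ (aeval M p *ᵥ v) = p.eval (lam i) * (u i ⬝ᵥ v) := by
    rw [dotProduct_mulVec, vecMul_aeval_eq_smul (vecMul_eq_smul_of_eq_sum_vecMulVec hu hM i),
      smul_dotProduct, smul_eq_mul]
  rw [← sum_sq_dotProduct_eq_of_orthonormal hu (aeval M p *ᵥ v),
    ← sum_sq_dotProduct_eq_of_orthonormal hu v, Finset.mul_sum]
  refine Finset.sum_le_sum fun i _ => ?_
  rw [hcoord, mul_pow]
  exact mul_le_mul_of_nonneg_right (sq_le_sq' (abs_le.1 (hc i)).1 (abs_le.1 (hc i)).2)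
    (sq_nonneg _)

lemma sum_sq_sub_mulVec_le_of_isMinOn_krylovSubspace {m n : Type*} [Fintype m] [DecidableEq m]
    [Fintype n] [DecidableEq n] {X : Matrix m n ℝ} {u : m → m → ℝ}
    (hu : ∀ i j, u i ⬝ᵥ u j = if i = j then 1 else 0) {lam : m → ℝ}
    (hM : X * Xᵀ = ∑ i, lam i • vecMulVec (u i) (u i)) {a b : ℝ} (ha : 0 < a) (hab : a < b)
    (hlam : ∀ i, lam i ∈ Set.Icc a b) (Y : m → ℝ) (k : ℕ) {βhat : n → ℝ}
    (hmin : IsMinOn (fun β => ∑ i, (Y i - (X *ᵥ β) i) ^ 2) (krylovSubspace (Xᵀ * X) (Xᵀ *ᵥ Y) k)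
      βhat) :
    ∑ i, (Y i - (X *ᵥ βhat) i) ^ 2 ≤ 4 * chebyshevRate (b / a) ^ (2 * k) * ∑ i, Y i ^ 2 := by
  obtain ⟨r, hr, hr0, hrab⟩ := exists_eval_zero_eq_one_abs_eval_le ha hab k
  obtain ⟨β, hβ, hres⟩ := exists_mem_krylovSubspace_sub_mulVec_eq X Y hr hr0
  calc ∑ i, (Y i - (X *ᵥ βhat) i) ^ 2 ≤ ∑ i, (Y i - (X *ᵥ β) i) ^ 2 := isMinOn_iff.1 hmin β hβ
    _ = ∑ i, (aeval (X * Xᵀ) r *ᵥ Y) i ^ 2 := by simp [← hres]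
    _ ≤ (2 * chebyshevRate (b / a) ^ k) ^ 2 * ∑ i, Y i ^ 2 :=
      sum_sq_aeval_mulVec_le hu hM (fun i => hrab _ (hlam i)) Y
    _ = 4 * chebyshevRate (b / a) ^ (2 * k) * ∑ i, Y i ^ 2 := by ring

lemma sum_sq_sub_le_of_sum_sq_add_sub_le {m : Type*} [Fintype m] {f e g : m → ℝ} {t : ℝ}
    (ht₀ : 0 ≤ t) (ht₁ : t ≤ 1)
    (h : ∑ i, (f i + e i - g i) ^ 2 ≤ 4 * t * ∑ i, (f i + e i) ^ 2) :
    ∑ i, (f i - g i) ^ 2 ≤ 18 * ∑ i, e i ^ 2 + 16 * t * ∑ i, f i ^ 2 := by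
  have hfg : ∑ i, (f i - g i) ^ 2 ≤ 2 * ∑ i, e i ^ 2 + 2 * ∑ i, (f i + e i - g i) ^ 2 := by
    rw [Finset.mul_sum, Finset.mul_sum, ← Finset.sum_add_distrib]
    exact Finset.sum_le_sum fun i _ => by nlinarith [add_sq_le (a := -e i) (b := f i + e i - g i)]
  have hfe : ∑ i, (f i + e i) ^ 2 ≤ 2 * ∑ i, f i ^ 2 + 2 * ∑ i, e i ^ 2 := by
    rw [Finset.mul_sum, Finset.mul_sum, ← Finset.sum_add_distrib]
    exact Finset.sum_le_sum fun i _ => add_sq_le.trans_eq (by ring)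
  have he : 0 ≤ ∑ i, e i ^ 2 := by positivity
  nlinarith [mul_le_mul_of_nonneg_left hfe ht₀, mul_le_mul_of_nonneg_left ht₁ he]

lemma hasSubgaussianMGF_id_gaussianReal (v : ℝ≥0) : HasSubgaussianMGF id v (gaussianReal 0 v) where
  integrable_exp_mul t := integrable_exp_mul_gaussianReal t
  mgf_le t := by simp [mgf_id_gaussianReal]

lemma ProbabilityTheory.HasSubgaussianMGF.measure_abs_ge_le {Ω : Type*} {mΩ : MeasurableSpace Ω}
    {μ : Measure Ω} {X : Ω → ℝ} {c : ℝ≥0} (h : HasSubgaussianMGF X c μ) {ε : ℝ} (hε : 0 ≤ ε) :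
    μ.real {ω | ε ≤ |X ω|} ≤ 2 * Real.exp (-ε ^ 2 / (2 * c)) := by
  have hsplit : {ω | ε ≤ |X ω|} = {ω | ε ≤ X ω} ∪ {ω | ε ≤ (-X) ω} := by
    ext ω; simp [le_abs]
  rw [hsplit, two_mul]
  exact (measureReal_union_le _ _).trans (add_le_add (h.measure_ge_le hε) (h.neg.measure_ge_le hε))

lemma one_sub_inv_le_measure_sum_sq_le_log {Ω : Type*} {mΩ : MeasurableSpace Ω}
    {P : Measure Ω} [IsProbabilityMeasure P] {n : ℕ} (hn : 2 ≤ n) {eps : Ω → Fin n → ℝ}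
    (hmeas : ∀ i, Measurable fun ω => eps ω i)
    (heps : ∀ i, P.map (fun ω => eps ω i) = gaussianReal 0 ((n : ℝ≥0))⁻¹) :
    ENNReal.ofReal (1 - (n : ℝ)⁻¹) ≤ P {ω | ∑ i, eps ω i ^ 2 ≤ 6 * Real.log n} := by
  have hn0 : (0 : ℝ) < n := by positivity
  set τ := √(6 * Real.log n / n)
  have hτ : τ ^ 2 = 6 * Real.log n / n := Real.sq_sqrt (by positivity)
  set F := ⋃ i, {ω | τ ≤ |eps ω i|}
  have hF : MeasurableSet F :=
    MeasurableSet.iUnion fun i => measurableSet_le measurable_const (by fun_prop)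
  -- each coordinate leaves `[-τ, τ]` with probability at most `2 exp (-n τ² / 2) = 2 n⁻³`
  have htail i : P.real {ω | τ ≤ |eps ω i|} ≤ 2 * ((n : ℝ) ^ 3)⁻¹ := by
    have hsub : HasSubgaussianMGF (fun ω => eps ω i) (n : ℝ≥0)⁻¹ P :=
      (HasSubgaussianMGF.id_map_iff (hmeas i).aemeasurable).1
        (heps i ▸ hasSubgaussianMGF_id_gaussianReal _)
    have hexp : Real.exp (-τ ^ 2 / (2 * ((n : ℝ≥0)⁻¹ : ℝ≥0))) = ((n : ℝ) ^ 3)⁻¹ := by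
      rw [hτ, NNReal.coe_inv, NNReal.coe_natCast,
        show -(6 * Real.log n / n) / (2 * (n : ℝ)⁻¹) = -((3 : ℕ) * Real.log n) by
          field_simp; ring,
        Real.exp_neg, Real.exp_nat_mul, Real.exp_log hn0]
    exact hexp ▸ hsub.measure_abs_ge_le (Real.sqrt_nonneg _)
  have hPF : P.real F ≤ (n : ℝ)⁻¹ :=
    calc P.real F ≤ ∑ i, P.real {ω | τ ≤ |eps ω i|} := measureReal_iUnion_fintype_le _
      _ ≤ ∑ _i : Fin n, 2 * ((n : ℝ) ^ 3)⁻¹ := Finset.sum_le_sum fun i _ => htail i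
      _ ≤ (n : ℝ)⁻¹ := by
        rw [Finset.sum_const, Finset.card_univ, Fintype.card_fin, nsmul_eq_mul]
        have : (2 : ℝ) ≤ n := by exact_mod_cast hn
        field_simp
        nlinarith
  calc ENNReal.ofReal (1 - (n : ℝ)⁻¹) ≤ ENNReal.ofReal (P.real Fᶜ) := by
        rw [probReal_compl_eq_one_sub hF]; gcongr
    _ = P Fᶜ := ofReal_measureReal
    _ ≤ P {ω | ∑ i, eps ω i ^ 2 ≤ 6 * Real.log n} := measure_mono fun ω hω => by
        simp only [F, Set.mem_compl_iff, Set.mem_iUnion, Set.mem_ofPred_eq, not_exists,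
          not_le] at hω
        calc ∑ i, eps ω i ^ 2 ≤ ∑ _i : Fin n, τ ^ 2 := Finset.sum_le_sum fun i _ => by
              rw [← sq_abs]; exact pow_le_pow_left₀ (abs_nonneg _) (hω i).le 2
          _ = 6 * Real.log n := by simp [hτ]; field_simp

lemma mean_sq_le_of_noise_le {n L S N E t W ℓ : ℝ} (hn : 0 < n) (hL : 0 < L) (hℓ : 0 ≤ ℓ)
    (ht : 0 ≤ t) (hW : 0 ≤ W) (hS : n * L ≤ S) (hN : N ≤ 6 * ℓ)
    (hE : E ≤ 18 * N + 16 * t * S) :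
    1 / n * E ≤ 108 * ((t + ℓ / (n * L) * (1 + t)) * (1 / n * S) + W) := by
  have hℓS : ℓ ≤ ℓ / (n * L) * S := by
    rw [div_mul_eq_mul_div, le_div_iff₀ (by positivity)]
    exact mul_le_mul_of_nonneg_left hS hℓ
  have hℓS' : ℓ / (n * L) * S ≤ ℓ / (n * L) * (1 + t) * S := by
    have : 0 ≤ ℓ / (n * L) * S := hℓ.trans hℓS
    nlinarith
  have htS : 0 ≤ t * S := mul_nonneg ht (by nlinarith)
  rw [div_mul_eq_mul_div, one_mul, div_le_iff₀ hn]
  have : 108 * ((t + ℓ / (n * L) * (1 + t)) * (1 / n * S) + W) * n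
      = 108 * (t * S + ℓ / (n * L) * (1 + t) * S) + 108 * W * n := by
    field_simp
  nlinarith

/-- there are universal constants C > 1 and C̃ > 0 such that, for
i.i.d. N(0, 1/n) noise, min_i p_i² ≥ L > 0 and 1 ≤ k < n, with probability at least
1 − n^{1−C} every minimizer β̂_k of ‖Y − Xβ‖² over K^k(XᵀX, XᵀY) satisfies
(1/n)‖Xβ* − Xβ̂_k‖² ≤ C̃·{[ρ^{2k} + (log n/(nL))(1+ρ^{2k})]·(1/n)‖Xβ*‖²
+ (k²/L)(log n/n²)(1 + C√(log n/(nL)))²·‖Xβ*‖²_W}. -/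
theorem stmt18 :
    ∃ C : ℝ, 1 < C ∧ ∃ Ctilde : ℝ, 0 < Ctilde ∧
      ∀ (n q : ℕ) (X : Matrix (Fin n) (Fin q) ℝ) (βstar : Fin q → ℝ)
        (lam : Fin n → ℝ) (u : Fin n → Fin n → ℝ),
        (∀ i j, u i ⬝ᵥ u j = if i = j then (1 : ℝ) else 0) →
        X * Xᵀ = ∑ i, lam i • vecMulVec (u i) (u i) →
        StrictAnti lam → (∀ i, 0 < lam i) →
        ∀ (Ω : Type) (_mΩ : MeasurableSpace Ω) (P : Measure Ω),
          IsProbabilityMeasure P →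
          ∀ (eps : Ω → Fin n → ℝ),
            (∀ i, Measurable fun ω => eps ω i) →
            iIndepFun (fun i ω => eps ω i) P →
            (∀ i, Measure.map (fun ω => eps ω i) P = gaussianReal 0 ((n : ℝ≥0))⁻¹) →
            ∀ (L : ℝ), 0 < L → (∀ i, L ≤ (u i ⬝ᵥ (X *ᵥ βstar)) ^ 2) →
            ∀ (k : ℕ) (hk1 : 1 ≤ k) (hkn : k < n),
              ENNReal.ofReal (1 - (n : ℝ) ^ (1 - C)) ≤
                P {ω | ∀ βhat : Fin q → ℝ,
                  βhat ∈ Submodule.span ℝ {v : Fin q → ℝ | ∃ j < k,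
                      v = ((Xᵀ * X) ^ j) *ᵥ (Xᵀ *ᵥ (X *ᵥ βstar + eps ω))} →
                  (∀ β ∈ Submodule.span ℝ {v : Fin q → ℝ | ∃ j < k,
                      v = ((Xᵀ * X) ^ j) *ᵥ (Xᵀ *ᵥ (X *ᵥ βstar + eps ω))},
                    ∑ i, ((X *ᵥ βstar + eps ω) i - (X *ᵥ βhat) i) ^ 2 ≤
                      ∑ i, ((X *ᵥ βstar + eps ω) i - (X *ᵥ β) i) ^ 2) →
                  (1 / n : ℝ) * ∑ i, ((X *ᵥ βstar) i - (X *ᵥ βhat) i) ^ 2 ≤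
                    Ctilde *
                      ((((Real.sqrt (lam ⟨0, by omega⟩ / lam ⟨n - 1, by omega⟩) - 1) /
                          (Real.sqrt (lam ⟨0, by omega⟩ / lam ⟨n - 1, by omega⟩) + 1)) ^ (2 * k) +
                          Real.log n / (n * L) *
                            (1 + ((Real.sqrt (lam ⟨0, by omega⟩ / lam ⟨n - 1, by omega⟩) - 1) /
                              (Real.sqrt (lam ⟨0, by omega⟩ / lam ⟨n - 1, by omega⟩) + 1)) ^ (2 * k))) *
                        ((1 / n : ℝ) * ∑ i, ((X *ᵥ βstar) i) ^ 2) +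
                        ((k : ℝ) ^ 2 / L) * (Real.log n / (n : ℝ) ^ 2) *
                          (1 + C * Real.sqrt (Real.log n / (n * L))) ^ 2 *
                          ∑ i, sSup {r : ℝ | ∃ j : Fin k → Fin n, StrictAnti j ∧
                              r = ∏ l, |lam i / lam (j l) - 1| ^ 2} *
                            (u i ⬝ᵥ (X *ᵥ βstar)) ^ 2)} := by
  refine ⟨2, one_lt_two, 108, by norm_num, ?_⟩
  intro n q X βstar lam u hu hM hlam hpos Ω _ P _ eps hmeas _ heps L hL hp k _ hkn
  have hn : 2 ≤ n := by omega
  have hab : lam ⟨n - 1, by omega⟩ < lam ⟨0, by omega⟩ := hlam (Fin.mk_lt_mk.2 (by omega))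
  have hspec i : lam i ∈ Set.Icc (lam ⟨n - 1, by omega⟩) (lam ⟨0, by omega⟩) :=
    ⟨hlam.antitone (Fin.mk_le_mk.2 (by omega)), hlam.antitone (Fin.mk_le_mk.2 (Nat.zero_le _))⟩
  have hrate : chebyshevRate (lam ⟨0, by omega⟩ / lam ⟨n - 1, by omega⟩) ^ (2 * k) ≤ 1 :=
    pow_le_one₀ (chebyshevRate_nonneg ((one_le_div (hpos _)).2 hab.le))
      (chebyshevRate_lt_one _).le
  have hsignal : n * L ≤ ∑ i, (X *ᵥ βstar) i ^ 2 := by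
    rw [← sum_sq_dotProduct_eq_of_orthonormal hu]
    simpa using Finset.sum_le_sum (s := Finset.univ) fun i _ => hp i
  have hW : 0 ≤ ((k : ℝ) ^ 2 / L) * (Real.log n / (n : ℝ) ^ 2) *
      (1 + 2 * Real.sqrt (Real.log n / (n * L))) ^ 2 *
      ∑ i, sSup {r : ℝ | ∃ j : Fin k → Fin n, StrictAnti j ∧
        r = ∏ l, |lam i / lam (j l) - 1| ^ 2} * (u i ⬝ᵥ (X *ᵥ βstar)) ^ 2 :=
    mul_nonneg (by positivity) <| Finset.sum_nonneg fun i _ => mul_nonneg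
      (Real.sSup_nonneg fun r ⟨j, _, hr⟩ => hr ▸ by positivity) (sq_nonneg _)
  rw [show (n : ℝ) ^ ((1 : ℝ) - 2) = (n : ℝ)⁻¹ by norm_num [Real.rpow_neg_one]]
  refine (one_sub_inv_le_measure_sum_sq_le_log hn hmeas heps).trans
    (measure_mono fun ω hnoise βhat _ hmin => ?_)
  have hfit := sum_sq_sub_mulVec_le_of_isMinOn_krylovSubspace hu hM (hpos _) hab hspec _ k
    (isMinOn_iff.2 hmin)
  exact mean_sq_le_of_noise_le (by norm_cast; omega) hL
    (Real.log_nonneg (by norm_cast; omega)) ((even_two_mul k).pow_nonneg _) hW hsignal hnoise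
    (sum_sq_sub_le_of_sum_sq_add_sub_le ((even_two_mul k).pow_nonneg _) hrate hfit)
end
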